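/- arXiv:2407.21606 — 12 statements merged into one kernel-verified Lean document; each statement's English description precedes it below -/
import Mathlib

section
/- Every quandle endomorphism of the dihedral quandle Z_n is uniquely determined by its values on 0 and 1; consequently the endomorphism monoid of Z_n has exactly n^2 elements. -/
lemma dihedral_aux {n : ℕ} [NeZero n] (f : ZMod n → ZMod n)
    (hf : ∀ a b : ZMod n, f (2 * b - a) = 2 * f b - f a) :
    ∀ x : ZMod n, f x = f 0 + x * (f 1 - f 0) := by
  have key : ∀ k : ℕ, f (k : ZMod n) = f 0 + (k : ZMod n) * (f 1 - f 0) := by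
    have step : ∀ k : ℕ, (f (k : ZMod n) = f 0 + (k : ZMod n) * (f 1 - f 0)) ∧
        (f ((k + 1 : ℕ) : ZMod n) = f 0 + ((k + 1 : ℕ) : ZMod n) * (f 1 - f 0)) := by
      intro k
      induction k with
      | zero => constructor <;> simp
      | succ m ih =>
        refine ⟨ih.2, ?_⟩
        have h2 : ((m + 2 : ℕ) : ZMod n) = 2 * ((m + 1 : ℕ) : ZMod n) - (m : ZMod n) := by
          push_cast; ring
        rw [h2, hf, ih.1, ih.2]
        push_cast; ring
    exact fun k => (step k).1
  intro x
  obtain ⟨k, rfl⟩ := ZMod.natCast_zmod_surjective x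
  exact key k

/-- Every quandle endomorphism of the dihedral quandle `Z_n` is determined by its
values at `0` and `1`, and the endomorphism monoid has exactly `n ^ 2` elements. -/
theorem dihedral_endos (n : ℕ) (hn : 1 ≤ n) :
    (∀ f g : ZMod n → ZMod n,
      (∀ a b : ZMod n, f (2 * b - a) = 2 * f b - f a) →
      (∀ a b : ZMod n, g (2 * b - a) = 2 * g b - g a) →
      f 0 = g 0 → f 1 = g 1 → f = g) ∧
    Nat.card {f : ZMod n → ZMod n // ∀ a b : ZMod n, f (2 * b - a) = 2 * f b - f a}
      = n ^ 2 := by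
  haveI : NeZero n := ⟨by omega⟩
  constructor
  · intro f g hf hg h0 h1
    funext x
    rw [dihedral_aux f hf x, dihedral_aux g hg x, h0, h1]
  · have e : {f : ZMod n → ZMod n // ∀ a b : ZMod n, f (2 * b - a) = 2 * f b - f a} ≃
        ZMod n × ZMod n :=
      { toFun := fun f => (f.1 0, f.1 1 - f.1 0)
        invFun := fun p => ⟨fun x => p.1 + x * p.2, by intro a b; ring⟩
        left_inv := fun f => by
          ext x
          exact (dihedral_aux f.1 f.2 x).symm
        right_inv := fun p => by simp }
    rw [Nat.card_congr e, Nat.card_prod, Nat.card_zmod, sq]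
end

section
/- For every a, b ∈ Z_n, the affine map f(x) = a·x + b is a quandle endomorphism of the dihedral quandle Z_n, and every quandle endomorphism of Z_n is of this form. -/
/-- Affine maps `x ↦ a·x + b` are exactly the quandle endomorphisms of the
dihedral quandle `Z_n`. -/
theorem dihedral_endos_affine (n : ℕ) :
    (∀ a b : ZMod n, ∀ u v : ZMod n,
      a * (2 * v - u) + b = 2 * (a * v + b) - (a * u + b)) ∧
    (∀ f : ZMod n → ZMod n,
      (∀ u v : ZMod n, f (2 * v - u) = 2 * f v - f u) →
      ∃ a b : ZMod n, ∀ x : ZMod n, f x = a * x + b) := by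
  constructor
  · intro a b u v; ring
  · intro f hf
    set a := f 1 - f 0 with ha
    set b := f 0 with hb
    refine ⟨a, b, ?_⟩
    have hneg : ∀ x : ZMod n, f (-x) = 2 * b - f x := by
      intro x
      have := hf x 0
      simpa using this
    have hnat : ∀ m : ℕ, f (m : ZMod n) = a * m + b := by
      intro m
      induction m using Nat.twoStepInduction with
      | zero => simp [hb]
      | one => simp [ha, hb]
      | more m ih1 ih2 =>
        have key : ((m + 2 : ℕ) : ZMod n) = 2 * ((m + 1 : ℕ) : ZMod n) - (m : ZMod n) := by
          push_cast; ring
        rw [key, hf, ih1, ih2]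
        push_cast; ring
    intro x
    obtain ⟨m, rfl⟩ := ZMod.intCast_surjective x
    cases m with
    | ofNat m => simpa using hnat m
    | negSucc m =>
      have : ((Int.negSucc m : ℤ) : ZMod n) = -((m + 1 : ℕ) : ZMod n) := by
        push_cast [Int.negSucc_eq]; ring
      rw [this, hneg, hnat]
      push_cast [Int.negSucc_eq]; ring
end

section
/- For a fixed basepoint y ∈ Z_n, the set of quandle endomorphisms φ of the dihedral quandle Z_n with φ(y) = y has exactly n elements, each uniquely determined by the value φ(y+1). -/
private lemma dihedral_endo_form (n : ℕ) [NeZero n] (y : ZMod n)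
    (f : ZMod n → ZMod n)
    (hf : ∀ a b : ZMod n, f (2 * b - a) = 2 * f b - f a)
    (hy : f y = y) :
    ∀ x : ZMod n, f x = y + (x - y) * (f (y + 1) - y) := by
  have step : ∀ k : ℕ, f (y + (k : ZMod n)) = y + (k : ZMod n) * (f (y + 1) - y) := by
    intro k
    induction k using Nat.twoStepInduction with
    | zero => simpa using hy
    | one => push_cast; ring_nf
    | more k ih1 ih2 =>
      have key : (y + ((k + 2 : ℕ) : ZMod n)) =
          2 * (y + ((k + 1 : ℕ) : ZMod n)) - (y + (k : ZMod n)) := by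
        push_cast; ring
      rw [key, hf, ih1, ih2]
      push_cast; ring
  intro x
  have := step (x - y).val
  rw [ZMod.natCast_val, ZMod.cast_id] at this
  have hx : y + (x - y) = x := by ring
  rwa [hx] at this

/-- For a fixed basepoint `y`, the quandle endomorphisms of the dihedral quandle
`Z_n` fixing `y` number exactly `n`, each determined by the value at `y + 1`. -/
theorem pointed_dihedral_endos (n : ℕ) (hn : 1 ≤ n) (y : ZMod n) :
    (∀ f g : ZMod n → ZMod n,
      (∀ a b : ZMod n, f (2 * b - a) = 2 * f b - f a) →
      (∀ a b : ZMod n, g (2 * b - a) = 2 * g b - g a) →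
      f y = y → g y = y → f (y + 1) = g (y + 1) → f = g) ∧
    Nat.card {f : ZMod n → ZMod n //
      (∀ a b : ZMod n, f (2 * b - a) = 2 * f b - f a) ∧ f y = y} = n := by
  haveI : NeZero n := ⟨by omega⟩
  constructor
  · intro f g hf hg hfy hgy h
    funext x
    rw [dihedral_endo_form n y f hf hfy x, dihedral_endo_form n y g hg hgy x, h]
  · have e : {f : ZMod n → ZMod n //
        (∀ a b : ZMod n, f (2 * b - a) = 2 * f b - f a) ∧ f y = y} ≃ ZMod n :=
      { toFun := fun f => f.1 (y + 1) - y
        invFun := fun c => ⟨fun x => y + (x - y) * c, by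
          constructor
          · intro a b; ring
          · simp⟩
        left_inv := by
          intro f
          ext x
          exact (dihedral_endo_form n y f.1 f.2.1 f.2.2 x).symm
        right_inv := by
          intro c
          simp only
          ring }
    rw [Nat.card_congr e, Nat.card_zmod]
end

section
/- Let p, n ∈ ℕ and let φ : {x_1,...,x_{p+1}} → Z_n be a function satisfying φ(x_i) = 2φ(x_{i+1}) - φ(x_{i+2}) for 1 ≤ i ≤ p-1 and φ(x_p) = 2φ(x_{p+1}) - φ(x_2). Then p·φ(x_2) ≡ p·φ(x_{p+1}) (mod n) and φ(x_1) ≡ φ(x_{p+1}) (mod n). -/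
/-- For a coloring `φ` of the arcs `x_1, …, x_{p+1}` of the `T(p,2)`-type linkoid by
the dihedral quandle `Z_n`, we have `p·φ(x_2) = p·φ(x_{p+1})` and `φ(x_1) = φ(x_{p+1})`. -/
theorem torus_coloring_props (p n : ℕ) (φ : ℕ → ZMod n)
    (h1 : ∀ i : ℕ, 1 ≤ i → i ≤ p - 1 → φ i = 2 * φ (i + 1) - φ (i + 2))
    (h2 : φ p = 2 * φ (p + 1) - φ 2) :
    (p : ZMod n) * φ 2 = (p : ZMod n) * φ (p + 1) ∧ φ 1 = φ (p + 1) := by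
  rcases Nat.lt_or_ge p 2 with hp | hp
  · interval_cases p
    · simp
    · refine ⟨rfl, ?_⟩
      rw [h2]; ring
  · -- consecutive differences are constant
    have hd : ∀ k, 1 ≤ k → k ≤ p → φ (k + 1) - φ k = φ 2 - φ 1 := by
      intro k hk1 hkp
      induction k with
      | zero => omega
      | succ m ih =>
        rcases Nat.eq_zero_or_pos m with hm | hm
        · subst hm; rfl
        · have hmp : m ≤ p - 1 := by omega
          have h := h1 m hm hmp
          have hprev := ih hm (by omega)
          have : φ (m + 2) - φ (m + 1) = φ (m + 1) - φ m := by
            linear_combination h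
          rw [show m + 1 + 1 = m + 2 from rfl, this, hprev]
    have hφ : ∀ k, 1 ≤ k → k ≤ p + 1 →
        φ k = φ 1 + ((k - 1 : ℕ) : ZMod n) * (φ 2 - φ 1) := by
      intro k hk1 hk
      induction k with
      | zero => omega
      | succ m ih =>
        rcases Nat.eq_zero_or_pos m with hm | hm
        · subst hm; simp
        · have hprev := ih hm (by omega)
          have hdm := hd m hm (by omega)
          have hc : ((m + 1 - 1 : ℕ) : ZMod n) = ((m - 1 : ℕ) : ZMod n) + 1 := by
            have : m + 1 - 1 = (m - 1) + 1 := by omega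
            rw [this]; push_cast; ring
          rw [hc]
          linear_combination hdm + hprev
    have e2 : φ 2 = φ 1 + ((1 : ℕ) : ZMod n) * (φ 2 - φ 1) := by
      simpa using hφ 2 (by omega) (by omega)
    have ep : φ p = φ 1 + ((p - 1 : ℕ) : ZMod n) * (φ 2 - φ 1) :=
      hφ p (by omega) (by omega)
    have ep1 : φ (p + 1) = φ 1 + ((p + 1 - 1 : ℕ) : ZMod n) * (φ 2 - φ 1) :=
      hφ (p + 1) (by omega) (by omega)
    have hc1 : ((p - 1 : ℕ) : ZMod n) = (p : ZMod n) - 1 := by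
      have : (p : ℕ) = (p - 1) + 1 := by omega
      rw [this]; push_cast; ring
    have hc2 : ((p + 1 - 1 : ℕ) : ZMod n) = (p : ZMod n) := by
      norm_num
    rw [hc1] at ep
    rw [hc2] at ep1
    have key : (p : ZMod n) * (φ 2 - φ 1) = 0 := by
      have := h2
      rw [ep, ep1, e2] at this
      push_cast at this
      linear_combination -this
    constructor
    · have : (p : ZMod n) * φ 2 - (p : ZMod n) * φ (p + 1)
          = -(((p : ZMod n) - 1) * ((p : ZMod n) * (φ 2 - φ 1))) := by
        rw [ep1, e2]; push_cast; ring
      linear_combination this - ((p : ZMod n) - 1) * key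
    · rw [ep1, key]; ring
end

section
/- Let p, n ∈ ℕ and let α, β : {x_1,...,x_{p+1}} → Z_n both satisfy the T(p,2)-coloring relations (α(x_i) = 2α(x_{i+1}) - α(x_{i+2}) for 1 ≤ i ≤ p-1 and α(x_p) = 2α(x_{p+1}) - α(x_2), similarly for β). If α(x_2) = β(x_2) and α(x_{p+1}) = β(x_{p+1}), then α = β. -/
/-- A `Z_n`-coloring of the `T(p,2)`-type linkoid is determined by its values on
`x_2` and `x_{p+1}`. -/
theorem torus_coloring_determined (p n : ℕ) (α β : ℕ → ZMod n)
    (hα1 : ∀ i : ℕ, 1 ≤ i → i ≤ p - 1 → α i = 2 * α (i + 1) - α (i + 2))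
    (hα2 : α p = 2 * α (p + 1) - α 2)
    (hβ1 : ∀ i : ℕ, 1 ≤ i → i ≤ p - 1 → β i = 2 * β (i + 1) - β (i + 2))
    (hβ2 : β p = 2 * β (p + 1) - β 2)
    (h2 : α 2 = β 2) (hp1 : α (p + 1) = β (p + 1)) :
    ∀ i : ℕ, 1 ≤ i → i ≤ p + 1 → α i = β i := by
  have key : ∀ k : ℕ, ∀ i : ℕ, 1 ≤ i → i ≤ p + 1 → p + 1 - i ≤ k → α i = β i := by
    intro k
    induction k with
    | zero =>
      intro i h1 hle hk
      have : i = p + 1 := by omega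
      subst this
      exact hp1
    | succ k ih =>
      intro i h1 hle hk
      by_cases hcase : p + 1 - i ≤ k
      · exact ih i h1 hle hcase
      · -- p + 1 - i = k + 1, so i ≤ p
        have hip : i ≤ p := by omega
        rcases eq_or_lt_of_le hip with heq | hlt
        · subst heq
          rw [hα2, hβ2, h2, hp1]
        · -- i ≤ p - 1
          have h1' : i ≤ p - 1 := by omega
          have e1 : α (i + 1) = β (i + 1) := ih (i + 1) (by omega) (by omega) (by omega)
          have e2 : α (i + 2) = β (i + 2) := ih (i + 2) (by omega) (by omega) (by omega)
          rw [hα1 i h1 h1', hβ1 i h1 h1', e1, e2]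
  intro i h1 hle
  exact key (p + 1 - i) i h1 hle le_rfl
end

section
/- Let p, n ∈ ℕ with c = gcd(p, n) and d = n/c. Fix y ∈ Z_n. For each k ∈ {0,...,c-1}, the function α_k defined by α_k(x_i) = y + L(i-1)·k·d (where L(m) is the least nonnegative residue of m mod p) satisfies all T(p,2)-coloring relations and sends x_1 and x_{p+1} to y. -/
/-- With `c = gcd(p,n)`, `d = n/c`, and `k < c`, the function
`α_k(x_i) = y + L(i-1)·k·d` (where `L` is the least nonnegative residue mod `p`)
satisfies all `T(p,2)`-coloring relations and sends `x_1` and `x_{p+1}` to `y`. -/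
theorem torus_coloring_formula (p n : ℕ) (hp : 1 ≤ p) (y : ZMod n) (k : ℕ)
    (hk : k < Nat.gcd p n) :
    let d : ℕ := n / Nat.gcd p n
    let α : ℕ → ZMod n := fun i => y + (((i - 1) % p : ℕ) : ZMod n) * (k : ZMod n) * (d : ZMod n)
    (∀ i : ℕ, 1 ≤ i → i ≤ p - 1 → α i = 2 * α (i + 1) - α (i + 2)) ∧
    α p = 2 * α (p + 1) - α 2 ∧ α 1 = y ∧ α (p + 1) = y := by
  intro d α
  have hcp : Nat.gcd p n ∣ p := Nat.gcd_dvd_left p n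
  have hcn : Nat.gcd p n ∣ n := Nat.gcd_dvd_right p n
  have hd : Nat.gcd p n * d = n := Nat.mul_div_cancel' hcn
  have hkey : (p : ZMod n) * (k : ZMod n) * (d : ZMod n) = 0 := by
    have h1 : p * k * d = (p / Nat.gcd p n) * k * n := by
      conv_lhs => rw [← Nat.div_mul_cancel hcp]
      calc p / Nat.gcd p n * Nat.gcd p n * k * d
          = p / Nat.gcd p n * k * (Nat.gcd p n * d) := by ring
        _ = p / Nat.gcd p n * k * n := by rw [hd]
    have h2 := congrArg (fun m : ℕ => (m : ZMod n)) h1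
    push_cast at h2
    simpa [ZMod.natCast_self] using h2
  have hα : ∀ i, α i = y + (((i - 1) % p : ℕ) : ZMod n) * (k : ZMod n) * (d : ZMod n) :=
    fun i => rfl
  refine ⟨?_, ?_, ?_, ?_⟩
  · intro i hi1 hi2
    obtain ⟨j, rfl⟩ := Nat.exists_eq_add_of_le hi1
    rcases Nat.lt_or_ge (1 + j + 1) p with hlt | hge
    · -- i + 1 < p : all residues are small
      have e0 : (1 + j - 1) % p = j := by
        rw [show 1 + j - 1 = j by omega]; exact Nat.mod_eq_of_lt (by omega)
      have e1 : (1 + j + 1 - 1) % p = j + 1 := by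
        rw [show 1 + j + 1 - 1 = j + 1 by omega]; exact Nat.mod_eq_of_lt (by omega)
      have e2 : (1 + j + 2 - 1) % p = j + 2 := by
        rw [show 1 + j + 2 - 1 = j + 2 by omega]; exact Nat.mod_eq_of_lt (by omega)
      rw [hα, hα, hα, e0, e1, e2]
      push_cast
      ring
    · -- i + 1 = p
      have hpe : p = j + 2 := by omega
      have e0 : (1 + j - 1) % p = j := by
        rw [show 1 + j - 1 = j by omega]; exact Nat.mod_eq_of_lt (by omega)
      have e1 : (1 + j + 1 - 1) % p = j + 1 := by
        rw [show 1 + j + 1 - 1 = j + 1 by omega]; exact Nat.mod_eq_of_lt (by omega)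
      have e2 : (1 + j + 2 - 1) % p = 0 := by
        rw [show 1 + j + 2 - 1 = p by omega]; exact Nat.mod_self p
      rw [hα, hα, hα, e0, e1, e2]
      rw [hpe] at hkey
      push_cast at hkey ⊢
      linear_combination -hkey
  · rcases Nat.lt_or_ge p 2 with h1 | h2
    · have hp1 : p = 1 := by omega
      subst hp1
      simp only [hα]
      ring
    · obtain ⟨j, rfl⟩ : ∃ j, p = j + 2 := ⟨p - 2, by omega⟩
      have e0 : (j + 2 - 1) % (j + 2) = j + 1 := Nat.mod_eq_of_lt (by omega)
      have e1 : (j + 2 + 1 - 1) % (j + 2) = 0 := by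
        rw [show j + 2 + 1 - 1 = j + 2 by omega]; exact Nat.mod_self _
      have e2 : (2 - 1) % (j + 2) = 1 := Nat.mod_eq_of_lt (by omega)
      rw [hα, hα, hα, e0, e1, e2]
      push_cast at hkey ⊢
      linear_combination hkey
  · rw [hα]; simp
  · rw [hα]; simp
end

section
/- Let p, n ∈ ℕ with n ≥ 1, c = gcd(p, n), d = n/c, and fix y ∈ Z_n. The set of functions α : {x_1,...,x_{p+1}} → Z_n satisfying the T(p,2)-coloring relations together with α(x_1) = α(x_{p+1}) = y has exactly c elements. -/
lemma card_tors (p n : ℕ) (hn : 1 ≤ n) (hp : 1 ≤ p) :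
    Nat.card {t : ZMod n // (p : ZMod n) * t = 0} = Nat.gcd p n := by
  haveI : NeZero n := ⟨by omega⟩
  set c := Nat.gcd p n with hc
  have hc0 : 0 < c := Nat.gcd_pos_of_pos_left n hp
  set a := p / c with ha'
  set b := n / c with hb'
  have ha : p = c * a := (Nat.mul_div_cancel' (Nat.gcd_dvd_left p n)).symm
  have hb : n = c * b := (Nat.mul_div_cancel' (Nat.gcd_dvd_right p n)).symm
  have hcop : Nat.Coprime a b := Nat.coprime_div_gcd_div_gcd hc0
  have hb0 : 0 < b := Nat.div_pos (Nat.le_of_dvd (by omega) (Nat.gcd_dvd_right p n)) hc0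
  have key : Nonempty (Fin c ≃ {t : ZMod n // (p : ZMod n) * t = 0}) := by
    refine ⟨Equiv.ofBijective (fun k => ⟨((k.val * b : ℕ) : ZMod n), ?_⟩) ⟨?_, ?_⟩⟩
    · have h1 : ((p * (k.val * b) : ℕ) : ZMod n) = 0 := by
        have h2 : p * (k.val * b) = k.val * a * n := by rw [ha, hb]; ring
        rw [h2, Nat.cast_mul, ZMod.natCast_self, mul_zero]
      rwa [Nat.cast_mul] at h1
    · intro s t hst
      simp only [Subtype.mk.injEq] at hst
      have hlt : ∀ k : Fin c, k.val * b < n := by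
        intro k
        calc k.val * b < c * b := (Nat.mul_lt_mul_right hb0).mpr k.isLt
          _ = n := hb.symm
      have hs := ZMod.val_cast_of_lt (hlt s)
      have ht := ZMod.val_cast_of_lt (hlt t)
      rw [hst, ht] at hs
      have : s.val = t.val := Nat.eq_of_mul_eq_mul_right hb0 hs.symm
      exact Fin.ext this
    · rintro ⟨t, htt⟩
      have hcast : ((t.val : ℕ) : ZMod n) = t := by
        simp [ZMod.natCast_val, ZMod.cast_id]
      have hdvd : n ∣ p * t.val := by
        have h4 : ((p * t.val : ℕ) : ZMod n) = 0 := by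
          rw [Nat.cast_mul, hcast]; exact htt
        exact (ZMod.natCast_eq_zero_iff _ _).mp h4
      have hbdvd : b ∣ t.val := by
        have : c * b ∣ c * a * t.val := by rw [← ha, ← hb]; exact hdvd
        have h3 : b ∣ a * t.val := by
          rcases this with ⟨m, hm⟩
          refine ⟨m, ?_⟩
          have h5 : c * (a * t.val) = c * (b * m) := by
            simpa [mul_assoc] using hm
          exact Nat.eq_of_mul_eq_mul_left hc0 h5
        exact (Nat.Coprime.dvd_of_dvd_mul_left (hcop.symm) h3)
      rcases hbdvd with ⟨m, hm⟩
      have hmc : m < c := by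
        have hv : t.val < n := ZMod.val_lt t
        have h5 : m * b < c * b := by
          rw [mul_comm m b, ← hm, ← hb]; exact hv
        exact Nat.lt_of_mul_lt_mul_right h5
      refine ⟨⟨m, hmc⟩, ?_⟩
      simp only [Subtype.mk.injEq]
      rw [show m * b = t.val by rw [hm, Nat.mul_comm], hcast]
  obtain ⟨e⟩ := key
  rw [← Nat.card_congr e, Nat.card_eq_fintype_card, Fintype.card_fin]

lemma arith_of_rel (p n : ℕ) (hp : 1 ≤ p) (y : ZMod n) (α : Fin (p + 1) → ZMod n)
    (h1 : ∀ i : ℕ, (h : i + 2 ≤ p) →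
      α ⟨i, by omega⟩ = 2 * α ⟨i + 1, by omega⟩ - α ⟨i + 2, by omega⟩)
    (h0 : α ⟨0, by omega⟩ = y) :
    ∀ i : ℕ, (hi : i ≤ p) →
      α ⟨i, by omega⟩ = y + (i : ZMod n) * (α ⟨1, by omega⟩ - y) := by
  intro i
  induction i using Nat.strong_induction_on with
  | _ i ih =>
    match i with
    | 0 => intro _; simpa using h0
    | 1 => intro _; push_cast; ring
    | (k + 2) =>
      intro hk
      have e1 := ih k (by omega) (by omega)
      have e2 := ih (k + 1) (by omega) (by omega)
      have e3 := h1 k (by omega)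
      have : α ⟨k + 2, by omega⟩ = 2 * α ⟨k + 1, by omega⟩ - α ⟨k, by omega⟩ := by
        rw [e3]; ring
      rw [this, e1, e2]
      push_cast
      ring

/-- The pointed quandle counting invariant of the `T(p,2)`-type linkoid with respect
to `(Z_n, y, y)`: there are exactly `gcd(p, n)` colorings. -/
theorem torus_counting_invariant (p n : ℕ) (hn : 1 ≤ n) (hp : 1 ≤ p) (y : ZMod n) :
    Nat.card {α : Fin (p + 1) → ZMod n //
      (∀ i : ℕ, (h : i + 2 ≤ p) →
        α ⟨i, by omega⟩ = 2 * α ⟨i + 1, by omega⟩ - α ⟨i + 2, by omega⟩) ∧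
      α ⟨p - 1, by omega⟩ = 2 * α ⟨p, by omega⟩ - α ⟨1, by omega⟩ ∧
      α ⟨0, by omega⟩ = y ∧ α ⟨p, by omega⟩ = y} = Nat.gcd p n := by
  rw [← card_tors p n hn hp]
  refine Nat.card_congr ?_
  refine
    { toFun := fun A => ⟨A.1 ⟨1, by omega⟩ - y, ?_⟩
      invFun := fun t => ⟨fun i => y + (i.val : ZMod n) * t.1, ?_, ?_, ?_, ?_⟩
      left_inv := ?_
      right_inv := ?_ }
  · obtain ⟨α, hrel, hlast, h0, hP⟩ := A
    have := arith_of_rel p n hp y α hrel h0 p le_rfl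
    rw [hP] at this
    linear_combination -this
  · intro i hi
    push_cast
    ring
  · have hpc : ((p - 1 : ℕ) : ZMod n) = (p : ZMod n) - 1 := by
      push_cast [Nat.cast_sub hp]
      ring
    simp only [hpc]
    push_cast
    linear_combination -t.2
  · simp
  · linear_combination t.2
  · rintro ⟨α, hrel, hlast, h0, hP⟩
    apply Subtype.ext
    funext i
    have := arith_of_rel p n hp y α hrel h0 i.val (by omega)
    simp only [Fin.eta] at this
    exact this.symm
  · rintro ⟨t, ht⟩
    apply Subtype.ext
    simp
end

section
/- Let p, n ∈ ℕ and y₁, y₂ ∈ Z_n with y₁ ≠ y₂. Then there is no function α : {x_1,...,x_{p+1}} → Z_n satisfying the T(p,2)-coloring relations with α(x_1) = y₁ and α(x_{p+1}) = y₂; i.e., the pointed coloring set Hom(P(T̃(p,2)), (Z_n, y₁, y₂)) is empty. -/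
/-- If `y₁ ≠ y₂`, there is no coloring of the `T(p,2)`-type linkoid by the pointed
dihedral quandle `(Z_n, y₁, y₂)`. -/
theorem torus_no_coloring (p n : ℕ) (y₁ y₂ : ZMod n) (hy : y₁ ≠ y₂) :
    ¬ ∃ α : ℕ → ZMod n,
      (∀ i : ℕ, 1 ≤ i → i ≤ p - 1 → α i = 2 * α (i + 1) - α (i + 2)) ∧
      α p = 2 * α (p + 1) - α 2 ∧ α 1 = y₁ ∧ α (p + 1) = y₂ := by
  rintro ⟨α, h1, h2, hα1, hαp⟩
  rcases Nat.eq_zero_or_pos p with hp | hp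
  · subst hp
    exact hy (hα1 ▸ hαp ▸ rfl)
  · set d : ZMod n := α 1 - α 2 with hdd
    have hd : ∀ k, 1 ≤ k → k ≤ p → α k - α (k + 1) = d := by
      intro k hk1 hkp
      induction k with
      | zero => omega
      | succ m ih =>
        rcases Nat.eq_zero_or_pos m with hm | hm
        · subst hm; rfl
        · have hmp : m ≤ p - 1 := by omega
          have := h1 m hm hmp
          have ihm := ih hm (by omega)
          have : α (m + 1) - α (m + 2) = α m - α (m + 1) := by
            rw [this]; ring
          rw [this, ihm]
    have hsum : ∀ k, k ≤ p → α 1 - α (k + 1) = (k : ZMod n) * d := by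
      intro k hk
      induction k with
      | zero => simp
      | succ m ih =>
        have ihm := ih (by omega)
        have hm := hd (m + 1) (by omega) hk
        push_cast
        calc α 1 - α (m + 1 + 1) = (α 1 - α (m + 1)) + (α (m + 1) - α (m + 2)) := by ring
          _ = (m : ZMod n) * d + d := by rw [ihm, hm]
          _ = ((m : ZMod n) + 1) * d := by ring
    have hdp : α p - α (p + 1) = d := hd p hp le_rfl
    have h2' : α p - α (p + 1) = α (p + 1) - α 2 := by rw [h2]; ring
    have hA : α (p + 1) - α 2 = d - (p : ZMod n) * d := by
      have h1p := hsum p le_rfl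
      have h11 := hsum 1 hp
      simp only [Nat.cast_one, one_mul] at h11
      -- α(p+1) - α 2 = (α 1 - α 2) - (α 1 - α (p+1))
      calc α (p + 1) - α 2 = (α 1 - α 2) - (α 1 - α (p + 1)) := by ring
        _ = d - (p : ZMod n) * d := by rw [h1p]
    have hpd : (p : ZMod n) * d = 0 := by
      have := hdp.symm.trans (h2'.trans hA)
      linear_combination this
    have : y₁ - y₂ = 0 := by
      have := hsum p le_rfl
      rw [hα1, hαp] at this
      rw [this, hpd]
    exact hy (by linear_combination this)
end

section
/- Let n ∈ ℕ, n ≥ 1, and let f, g be quandle endomorphisms of the dihedral quandle Z_n. If f(y) = g(y) and f(y+1) = g(y+1) for some y ∈ Z_n, then f = g. -/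
/-- Two quandle endomorphisms of the dihedral quandle `Z_n` agreeing at some `y`
and `y + 1` are equal. -/
theorem dihedral_endo_eq (n : ℕ) (hn : 1 ≤ n) (f g : ZMod n → ZMod n)
    (hf : ∀ a b : ZMod n, f (2 * b - a) = 2 * f b - f a)
    (hg : ∀ a b : ZMod n, g (2 * b - a) = 2 * g b - g a)
    (y : ZMod n) (h0 : f y = g y) (h1 : f (y + 1) = g (y + 1)) :
    f = g := by
  have key : ∀ k : ℕ, f (y + k) = g (y + k) ∧ f (y + (k + 1)) = g (y + (k + 1)) := by
    intro k
    induction k with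
    | zero => simpa using ⟨h0, h1⟩
    | succ m ih =>
      push_cast at ih ⊢
      refine ⟨ih.2, ?_⟩
      have e : (y + ((m : ZMod n) + 1 + 1)) = 2 * (y + (m + 1)) - (y + m) := by ring
      rw [e, hf, hg, ih.1, ih.2]
  haveI : NeZero n := ⟨by omega⟩
  funext x
  have hx : x = y + ((x - y).val : ZMod n) := by
    rw [ZMod.natCast_val, ZMod.cast_id]; ring
  rw [hx]
  exact (key (x - y).val).1
end

section
/- Let p, n ∈ ℕ with c = gcd(p, n) prime, d = n/c, fix y ∈ Z_n. For every nontrivial pointed coloring α_k of T̃(p,2) and every pointed coloring α_l, the number of pointed endomorphisms φ of (Z_n, y, y) with φ ∘ α_k = α_l is exactly d. -/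
/-!
A quandle endomorphism `φ` of the dihedral quandle `ZMod n` has constant differences
`φ (x + 1) - φ x`, so it is affine; fixing `y`, it is `x ↦ y + s * (x - y)` for a unique slope `s`.
Since `p ≥ 2`, the coloring condition reduces to its instance on an arc with `(m - 1) % p = 1`,
namely `k d s = l d`. In `ZMod (c d)` we have `d x = 0` iff `c ∣ x`, and `k` is a unit modulo the
prime `c`, so the solutions form a fiber of the surjection `ZMod n → ZMod c`, of size `n / c`.
-/

theorem AddMonoidHom.card_fiber_mul_card_of_surjective {G H : Type*} [AddGroup G] [AddGroup H]
    {f : G →+ H} (hf : Function.Surjective f) (h : H) :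
    Nat.card (f ⁻¹' {h}) * Nat.card H = Nat.card G := by
  rw [Nat.card_congr (f.fiberEquivKerOfSurjective hf h), ← f.ker.card_mul_index,
    AddSubgroup.index_ker, f.range_eq_top.mpr hf, AddSubgroup.card_top]

namespace ZMod

variable {n : ℕ}

theorem eq_add_mul_of_map_two_mul_sub {φ : ZMod n → ZMod n}
    (hφ : ∀ a b, φ (2 * b - a) = 2 * φ b - φ a) (x : ZMod n) :
    φ x = φ 0 + (φ 1 - φ 0) * x := by
  have hdiff : ∀ x, φ (x + 1) - φ x = φ 1 - φ 0 := by
    intro x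
    obtain ⟨m, rfl⟩ := intCast_surjective x
    induction m using Int.induction_on with
    | zero => simp
    | succ i ih =>
      have := hφ (i : ZMod n) (i + 1)
      push_cast at ih ⊢
      rw [← ih, show (i : ZMod n) + 1 + 1 = 2 * (i + 1) - i by ring, this]
      ring
    | pred i ih =>
      have := hφ (-i - 1 : ZMod n) (-i)
      push_cast at ih ⊢
      rw [← ih, show (-i - 1 + 1 : ZMod n) = -i by ring,
        show (-i + 1 : ZMod n) = 2 * -i - (-i - 1) by ring, this]
      ring
  obtain ⟨m, rfl⟩ := intCast_surjective x
  induction m using Int.induction_on with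
  | zero => simp
  | succ i ih =>
    have := hdiff i
    push_cast at ih ⊢
    linear_combination this + ih
  | pred i ih =>
    have := hdiff (-i - 1)
    push_cast at ih ⊢
    rw [show (-i - 1 + 1 : ZMod n) = -i by ring] at this
    linear_combination ih - this

theorem eq_affine_of_map_two_mul_sub {φ : ZMod n → ZMod n}
    (hφ : ∀ a b, φ (2 * b - a) = 2 * φ b - φ a) (y x : ZMod n) :
    φ x = φ y + (φ (y + 1) - φ y) * (x - y) := by
  rw [eq_add_mul_of_map_two_mul_sub hφ x, eq_add_mul_of_map_two_mul_sub hφ y,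
    eq_add_mul_of_map_two_mul_sub hφ (y + 1)]
  ring

def dihedralEndoFixingEquiv (y : ZMod n) (P : (ZMod n → ZMod n) → Prop) :
    {φ : ZMod n → ZMod n // (∀ a b, φ (2 * b - a) = 2 * φ b - φ a) ∧ φ y = y ∧ P φ} ≃
      {s : ZMod n // P fun x => y + s * (x - y)} where
  toFun φ := ⟨φ.1 (y + 1) - y, by
    obtain ⟨φ, hφ, hy, hP⟩ := φ
    convert hP using 1
    funext x
    have := eq_affine_of_map_two_mul_sub hφ y x
    rw [hy] at this
    exact this.symm⟩
  invFun s := ⟨fun x => y + s.1 * (x - y), fun a b => by ring, by simp, s.2⟩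
  left_inv φ := by
    obtain ⟨φ, hφ, hy, hP⟩ := φ
    ext x
    have := eq_affine_of_map_two_mul_sub hφ y x
    rw [hy] at this
    exact this.symm
  right_inv s := by ext; simp

theorem natCast_div_mul_eq_zero_iff [NeZero n] {c : ℕ} (hcn : c ∣ n) (x : ZMod n) :
    ((n / c : ℕ) : ZMod n) * x = 0 ↔ castHom hcn (ZMod c) x = 0 := by
  obtain ⟨d, rfl⟩ := hcn
  have hc : 0 < c := Nat.pos_of_ne_zero (left_ne_zero_of_mul (NeZero.ne (c * d)))
  have hd : 0 < d := Nat.pos_of_ne_zero (right_ne_zero_of_mul (NeZero.ne (c * d)))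
  rw [castHom_apply, cast_eq_val, ← natCast_zmod_val x, ← Nat.cast_mul, natCast_zmod_val,
    natCast_eq_zero_iff, natCast_eq_zero_iff, Nat.mul_div_cancel_left _ hc,
    Nat.mul_comm d, Nat.mul_dvd_mul_iff_right hd]

theorem card_solutions_mul_natCast_div {c : ℕ} [Fact c.Prime] (hcn : c ∣ n) {k : ℕ}
    (hk : (k : ZMod c) ≠ 0) (l : ℕ) :
    Nat.card {s : ZMod n // k * (n / c : ℕ) * s = l * (n / c : ℕ)} = n / c := by
  rcases eq_or_ne n 0 with rfl | hn
  · -- `ZMod 0 = ℤ`: every `s` is a solution, and `Nat.card` of an infinite type is `0`.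
    simp
  have : NeZero n := ⟨hn⟩
  let f := castHom hcn (ZMod c)
  have hsol : ∀ s : ZMod n,
      (k : ZMod n) * (n / c : ℕ) * s = l * (n / c : ℕ) ↔ s ∈ f ⁻¹' {(l : ZMod c) / k} := by
    intro s
    calc (k : ZMod n) * (n / c : ℕ) * s = l * (n / c : ℕ)
        ↔ ((n / c : ℕ) : ZMod n) * (k * s - l) = 0 := by
          constructor <;> intro h <;> linear_combination h
      _ ↔ f (k * s - l) = 0 := natCast_div_mul_eq_zero_iff hcn _
      _ ↔ f s = l / k := by
          rw [map_sub, map_mul, map_natCast, map_natCast, sub_eq_zero, eq_div_iff hk, mul_comm]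
  rw [Nat.card_congr (Equiv.subtypeEquivRight hsol)]
  have := f.toAddMonoidHom.card_fiber_mul_card_of_surjective (castHom_surjective hcn) (l / k)
  rw [Nat.card_zmod, Nat.card_zmod] at this
  exact Nat.eq_div_of_mul_eq_left (NeZero.ne c) this

end ZMod

theorem torus_quiver_arcs_general (p n : ℕ) (hp : 1 ≤ p) (hc : (Nat.gcd p n).Prime)
    (y : ZMod n) (k l : ℕ) (hk1 : 1 ≤ k) (hk2 : k < Nat.gcd p n) :
    let c : ℕ := Nat.gcd p n
    let d : ℕ := n / c
    let α : ℕ → ℕ → ZMod n :=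
      fun k' m => y + (((m - 1) % p : ℕ) : ZMod n) * (k' : ZMod n) * (d : ZMod n)
    Nat.card {φ : ZMod n → ZMod n //
      (∀ a b : ZMod n, φ (2 * b - a) = 2 * φ b - φ a) ∧ φ y = y ∧
      (∀ m : ℕ, 1 ≤ m → m ≤ p + 1 → φ (α k m) = α l m)} = d := by
  intro c d α
  have : Fact c.Prime := ⟨hc⟩
  have hp2 : 2 ≤ p := hc.two_le.trans (Nat.le_of_dvd hp (Nat.gcd_dvd_left p n))
  have hk : (k : ZMod c) ≠ 0 := by
    rw [Ne, ZMod.natCast_eq_zero_iff]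
    exact Nat.not_dvd_of_pos_of_lt hk1 hk2
  have hcol : ∀ s : ZMod n, (∀ m, 1 ≤ m → m ≤ p + 1 → y + s * (α k m - y) = α l m) ↔
      k * d * s = l * d := by
    intro s
    constructor
    · intro h
      have h2 := h 2 (by omega) (by omega)
      simp only [α, show (2 - 1) % p = 1 from Nat.mod_eq_of_lt (by omega), Nat.cast_one] at h2
      linear_combination h2
    · intro h m _ _
      linear_combination (((m - 1) % p : ℕ) : ZMod n) * h
  rw [Nat.card_congr ((ZMod.dihedralEndoFixingEquiv y _).trans (Equiv.subtypeEquivRight hcol))]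
  exact ZMod.card_solutions_mul_natCast_div (Nat.gcd_dvd_right p n) hk l

/-- With `c = gcd(p,n)` prime and `d = n/c`: for every nontrivial pointed coloring
`α_k` of the `T(p,2)`-type linkoid and every pointed coloring `α_l`, exactly `d`
pointed endomorphisms `φ` of `(Z_n, y, y)` satisfy `φ ∘ α_k = α_l`. -/
theorem torus_quiver_arcs (p n : ℕ) (hp : 1 ≤ p) (hc : (Nat.gcd p n).Prime)
    (y : ZMod n) (k l : ℕ) (hk1 : 1 ≤ k) (hk2 : k < Nat.gcd p n)
    (hl : l < Nat.gcd p n) :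
    let c : ℕ := Nat.gcd p n
    let d : ℕ := n / c
    let α : ℕ → ℕ → ZMod n :=
      fun k' m => y + (((m - 1) % p : ℕ) : ZMod n) * (k' : ZMod n) * (d : ZMod n)
    Nat.card {φ : ZMod n → ZMod n //
      (∀ a b : ZMod n, φ (2 * b - a) = 2 * φ b - φ a) ∧ φ y = y ∧
      (∀ m : ℕ, 1 ≤ m → m ≤ p + 1 → φ (α k m) = α l m)} = d :=
  torus_quiver_arcs_general p n hp hc y k l hk1 hk2
end

section
/- Let n ≥ 1 and y ∈ Z_n. The map sending k ∈ Z_n to the affine function φ_k(x) = (k - y)·(x - y) + y is a bijection from Z_n onto the set of quandle endomorphisms of the dihedral quandle Z_n fixing y, and composition satisfies φ_j ∘ φ_k = φ_{(j-y)(k-y)+y}, making this set a monoid isomorphic to (ZMod n, ·) via k ↦ k - y. -/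
lemma endo_linear (n : ℕ) (hn : 1 ≤ n) (g : ZMod n → ZMod n)
    (hg : ∀ a b : ZMod n, g (2 * b - a) = 2 * g b - g a) (h0 : g 0 = 0) :
    ∀ x : ZMod n, g x = g 1 * x := by
  have : NeZero n := ⟨by omega⟩
  have hnat : ∀ m : ℕ, g m = g 1 * m ∧ g (m + 1) = g 1 * (m + 1) := by
    intro m
    induction m with
    | zero => simpa using h0
    | succ m ih =>
      refine ⟨by push_cast; exact_mod_cast ih.2, ?_⟩
      have := hg (m : ZMod n) ((m : ℕ) + 1)
      have h2 : (2 : ZMod n) * ((m : ℕ) + 1) - (m : ℕ) = ((m + 1 : ℕ) + 1) := by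
        push_cast; ring
      rw [h2] at this
      rw [this, ih.1, ih.2]
      push_cast; ring
  intro x
  obtain ⟨m, rfl⟩ := ZMod.natCast_zmod_surjective x
  exact (hnat m).1

/-- The map `k ↦ φ_k`, where `φ_k(x) = (k - y)·(x - y) + y`, is a bijection from
`Z_n` onto the quandle endomorphisms of the dihedral quandle `Z_n` fixing `y`,
and `φ_j ∘ φ_k = φ_{(j-y)(k-y)+y}`, so this monoid is isomorphic to `(Z_n, ·)`
via `k ↦ k - y`. -/
theorem pointed_endo_monoid (n : ℕ) (hn : 1 ≤ n) (y : ZMod n) :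
    let φ : ZMod n → ZMod n → ZMod n := fun k x => (k - y) * (x - y) + y
    (∀ k : ZMod n,
      (∀ a b : ZMod n, φ k (2 * b - a) = 2 * φ k b - φ k a) ∧ φ k y = y) ∧
    (∀ f : ZMod n → ZMod n,
      (∀ a b : ZMod n, f (2 * b - a) = 2 * f b - f a) → f y = y →
      ∃! k : ZMod n, f = φ k) ∧
    (∀ j k : ZMod n, φ j ∘ φ k = φ ((j - y) * (k - y) + y)) := by
  intro φ
  refine ⟨fun k => ⟨fun a b => by simp only [φ]; ring, by simp [φ]⟩, ?_, ?_⟩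
  · intro f hf hy
    set g : ZMod n → ZMod n := fun x => f (x + y) - y with hgdef
    have hg : ∀ a b : ZMod n, g (2 * b - a) = 2 * g b - g a := by
      intro a b
      have h2 : (2 : ZMod n) * b - a + y = 2 * (b + y) - (a + y) := by ring
      simp only [g, h2, hf]; ring
    have h0 : g 0 = 0 := by simp [g, hy]
    have hlin := endo_linear n hn g hg h0
    refine ⟨f (1 + y), ?_, ?_⟩
    · funext x
      have := hlin (x - y)
      simp only [g, sub_add_cancel] at this
      simp only [φ]
      have : f x - y = (f (1 + y) - y) * (x - y) := this
      linear_combination this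
    · intro k hk
      have : f (1 + y) = φ k (1 + y) := by rw [hk]
      simp only [φ] at this
      rw [this]; ring
  · intro j k
    funext x
    simp only [φ, Function.comp]; ring
end

section
/- Let p, n ∈ ℕ with gcd(p, n) = 1 and fix y ∈ Z_n. Then the only function α : {x_1,...,x_{p+1}} → Z_n satisfying the T(p,2)-coloring relations with α(x_1) = α(x_{p+1}) = y is the constant function with value y. -/
/-- When `gcd(p,n) = 1`, the only pointed coloring of the `T(p,2)`-type linkoid by
`(Z_n, y, y)` is the trivial (constant) one. -/
theorem torus_coprime_trivial (p n : ℕ) (h : Nat.gcd p n = 1) (y : ZMod n)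
    (α : ℕ → ZMod n)
    (h1 : ∀ i : ℕ, 1 ≤ i → i ≤ p - 1 → α i = 2 * α (i + 1) - α (i + 2))
    (h2 : α p = 2 * α (p + 1) - α 2)
    (hy1 : α 1 = y) (hy2 : α (p + 1) = y) :
    ∀ i : ℕ, 1 ≤ i → i ≤ p + 1 → α i = y := by
  set d := α 2 - α 1 with hd
  have key : ∀ k, k ≤ p → α (k + 1) = y + (k : ZMod n) * d := by
    intro k
    induction k using Nat.strong_induction_on with
    | _ k ih =>
      match k with
      | 0 => intro _; simpa using hy1
      | 1 => intro _; simp only [Nat.cast_one, hd, hy1]; ring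
      | (k+2) =>
        intro hk
        have h1' := h1 (k+1) (by omega) (by omega)
        have e1 := ih (k+1) (by omega) (by omega)
        have e2 := ih k (by omega) (by omega)
        rw [show k + 1 + 2 = k + 2 + 1 from rfl] at h1'
        push_cast
        push_cast at e1 e2
        linear_combination 2 * e1 - e2 + h1'
  have hp : (p : ZMod n) * d = 0 := by
    have hkey := key p le_rfl
    rw [hy2] at hkey
    linear_combination -hkey
  have hu : IsUnit (p : ZMod n) := (ZMod.unitOfCoprime p h).isUnit
  have hd0 : d = 0 := by
    rcases hu with ⟨u, hu⟩
    have : (u : ZMod n) * d = 0 := by rw [hu]; exact hp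
    simpa using (Units.mul_right_eq_zero u).mp this
  intro i hi1 hi2
  obtain ⟨k, rfl⟩ : ∃ k, i = k + 1 := ⟨i - 1, by omega⟩
  have := key k (by omega)
  simpa [hd0] using this
end
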